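/- arXiv:2101.00244 — 4 statements merged into one kernel-verified Lean document; each statement's English description precedes it below -/
import Mathlib

section
/- Let X and Y be sets and E ⊆ X × Y. If E has the 3-of-4 property, then there exist families (A_i)_{i ∈ I} of pairwise disjoint subsets of X and (B_i)_{i ∈ I} of pairwise disjoint subsets of Y such that E = ⋃_{i ∈ I} A_i × B_i. -/
universe u v

/-!
The 3-of-4 property forces any two rows `{y | (x, y) ∈ E}` to be equal or disjoint. Grouping the
points of `X` by their row `s` then decomposes `E` as the union of the rectangles
`{x | row x = s} ×ˢ s` over the distinct rows `s`.
-/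

theorem exists_pairwise_disjoint_iUnion_prod_eq {X : Type u} {Y : Type v} (f : X → Set Y)
    (hf : ∀ x₁ x₂, ¬Disjoint (f x₁) (f x₂) → f x₁ = f x₂) :
    ∃ (I : Type (max u v)) (A : I → Set X) (B : I → Set Y),
      Pairwise (Function.onFun Disjoint A) ∧ Pairwise (Function.onFun Disjoint B) ∧
      {p : X × Y | p.2 ∈ f p.1} = ⋃ i, A i ×ˢ B i := by
  refine ⟨ULift.{u} (Set.range f), fun i => f ⁻¹' {i.down.1}, fun i => i.down.1, ?_, ?_, ?_⟩
  · intro i j hij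
    exact Disjoint.preimage f <| Set.disjoint_singleton.mpr fun h => hij (ULift.ext _ _ (Subtype.ext h))
  · rintro ⟨⟨_, x₁, rfl⟩⟩ ⟨⟨_, x₂, rfl⟩⟩ hij
    by_contra hdisj
    exact hij (ULift.ext _ _ (Subtype.ext (hf x₁ x₂ hdisj)))
  · ext ⟨x, y⟩
    simp only [Set.mem_ofPred_eq, Set.mem_iUnion, Set.mem_prod, Set.mem_preimage,
      Set.mem_singleton_iff]
    exact ⟨fun hy => ⟨⟨f x, x, rfl⟩, rfl, hy⟩, fun ⟨i, hi, hy⟩ => hi ▸ hy⟩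

theorem preimage_prodMk_eq_of_mem {X : Type u} {Y : Type v} {E : Set (X × Y)}
    (hE : ∀ x₁ x₂ y₁ y₂, (x₁, y₁) ∈ E → (x₁, y₂) ∈ E → (x₂, y₁) ∈ E → (x₂, y₂) ∈ E)
    {x₁ x₂ : X} {y : Y} (h₁ : (x₁, y) ∈ E) (h₂ : (x₂, y) ∈ E) :
    Prod.mk x₁ ⁻¹' E = Prod.mk x₂ ⁻¹' E := by
  ext y'
  exact ⟨fun h => hE x₁ x₂ y y' h₁ h h₂, fun h => hE x₂ x₁ y y' h₂ h h₁⟩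

theorem stmt2 {X : Type u} {Y : Type v} (E : Set (X × Y))
    (h34 : ∀ (x₁ x₂ : X) (y₁ y₂ : Y), x₁ ≠ x₂ → y₁ ≠ y₂ →
      (((x₁, y₁) ∈ E ∧ (x₁, y₂) ∈ E ∧ (x₂, y₂) ∈ E) → (x₂, y₁) ∈ E) ∧
      (((x₁, y₁) ∈ E ∧ (x₁, y₂) ∈ E ∧ (x₂, y₁) ∈ E) → (x₂, y₂) ∈ E) ∧
      (((x₁, y₁) ∈ E ∧ (x₂, y₁) ∈ E ∧ (x₂, y₂) ∈ E) → (x₁, y₂) ∈ E) ∧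
      (((x₁, y₂) ∈ E ∧ (x₂, y₁) ∈ E ∧ (x₂, y₂) ∈ E) → (x₁, y₁) ∈ E)) :
    ∃ (I : Type (max u v)) (A : I → Set X) (B : I → Set Y),
      Pairwise (Function.onFun Disjoint A) ∧ Pairwise (Function.onFun Disjoint B) ∧
      E = ⋃ i, A i ×ˢ B i := by
  have hE : ∀ x₁ x₂ y₁ y₂, (x₁, y₁) ∈ E → (x₁, y₂) ∈ E → (x₂, y₁) ∈ E → (x₂, y₂) ∈ E := by
    intro x₁ x₂ y₁ y₂ h₁₁ h₁₂ h₂₁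
    rcases eq_or_ne x₁ x₂ with rfl | hx
    · exact h₁₂
    rcases eq_or_ne y₁ y₂ with rfl | hy
    · exact h₂₁
    exact (h34 x₁ x₂ y₁ y₂ hx hy).2.1 ⟨h₁₁, h₁₂, h₂₁⟩
  have hrows : ∀ x₁ x₂, ¬Disjoint (Prod.mk x₁ ⁻¹' E) (Prod.mk x₂ ⁻¹' E) →
      Prod.mk x₁ ⁻¹' E = Prod.mk x₂ ⁻¹' E := by
    intro x₁ x₂ h
    obtain ⟨y, h₁, h₂⟩ := Set.not_disjoint_iff.mp h
    exact preimage_prodMk_eq_of_mem hE h₁ h₂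
  exact exists_pairwise_disjoint_iUnion_prod_eq (fun x => Prod.mk x ⁻¹' E) hrows
end

section
/- Let G be a group acting on the right on a set Z and V ⊆ Z × G. Suppose that for every z ∈ Z there is a Hilbert space H and a function v_z : G → H such that for all s,t ∈ G, the indicator χ_W(z,s,t) = ⟨v_z(s), v_z(t)⟩, where W = {(z,s,t) : (z·t⁻¹, t s⁻¹) ∈ V}. Then for every (x,t) ∈ V, both (x, e) ∈ V and (x·t, e) ∈ V. -/
/-! A `{0,1}`-valued kernel `K(s,t) = ⟪v s, v t⟫` with `K(s,t) = 1` forces `v s ≠ 0` and `v t ≠ 0`,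
hence `K(s,s) = ‖v s‖² ≠ 0` and `K(t,t) ≠ 0`, i.e. both diagonal values are `1`. For the kernel
attached to `z = x·t`, the entry at `(1,t)` encodes `(x,t) ∈ V`, while the diagonal entries at `t` and
at `1` encode `(x,e) ∈ V` and `(x·t,e) ∈ V`. -/

open scoped Classical InnerProductSpace

section IndicatorKernel

variable {𝕜 E α : Type*} [RCLike 𝕜] [NormedAddCommGroup E] [InnerProductSpace 𝕜 E]

theorem inner_self_ne_zero_of_inner_ne_zero {u w : E} (h : ⟪u, w⟫_𝕜 ≠ 0) :
    ⟪u, u⟫_𝕜 ≠ 0 ∧ ⟪w, w⟫_𝕜 ≠ 0 := by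
  refine ⟨inner_self_ne_zero.mpr ?_, inner_self_ne_zero.mpr ?_⟩ <;> rintro rfl <;> simp at h

theorem diag_of_indicator_eq_inner {P : α → α → Prop} (v : α → E)
    (hv : ∀ s t, (if P s t then (1 : 𝕜) else 0) = ⟪v s, v t⟫_𝕜) {s t : α} (hst : P s t) :
    P s s ∧ P t t := by
  have hne : ⟪v s, v t⟫_𝕜 ≠ 0 := by simp [← hv, hst]
  obtain ⟨hs, ht⟩ := inner_self_ne_zero_of_inner_ne_zero hne
  rw [← hv] at hs ht
  exact ⟨of_not_not fun h ↦ hs (if_neg h), of_not_not fun h ↦ ht (if_neg h)⟩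

end IndicatorKernel

theorem stmt6 {Z G : Type*} [Group G] (act : Z → G → Z)
    (hact_one : ∀ z, act z 1 = z)
    (hact_mul : ∀ z s t, act z (s * t) = act (act z s) t)
    (V : Set (Z × G))
    (h : ∀ z : Z, ∃ (H : Type) (_ : NormedAddCommGroup H) (_ : InnerProductSpace ℂ H)
      (v : G → H), ∀ s t : G,
        (if (act z t⁻¹, t * s⁻¹) ∈ V then (1 : ℂ) else 0) = inner ℂ (v s) (v t)) :
    ∀ (x : Z) (t : G), (x, t) ∈ V → (x, (1 : G)) ∈ V ∧ (act x t, (1 : G)) ∈ V := by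
  intro x t hxt
  obtain ⟨H, _, _, v, hv⟩ := h (act x t)
  have hback : act (act x t) t⁻¹ = x := by rw [← hact_mul, mul_inv_cancel, hact_one]
  have h1t : (act (act x t) t⁻¹, t * 1⁻¹) ∈ V := by simpa [hback] using hxt
  obtain ⟨h11, htt⟩ := diag_of_indicator_eq_inner v hv h1t
  simp only [inv_one, mul_one, hact_one, mul_inv_cancel, hback] at h11 htt
  exact ⟨htt, h11⟩
end

section
/- Let H be a Hilbert space and v : S → H a function on a set S such that the kernel k(s,t) = ⟨v(s), v(t)⟩ takes only values 0 and 1. Then the relation s ∼ t ⟺ k(s,t) = 1, restricted to the set {s : k(s,s) = 1}, is an equivalence relation; consequently there exists a family of pairwise disjoint subsets (X_i)_{i ∈ I} of S with {(s,t) : k(s,t) = 1} = ⋃_{i ∈ I} X_i × X_i. -/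
/-!
If `⟪x, y⟫ = 1` and `⟪x, x⟫, ⟪y, y⟫ ∈ {0, 1}`, then neither vector is zero, so
`⟪x - y, x - y⟫ = 1 - 1 - 1 + 1 = 0` and `x = y`. Hence `k(s, t) = 1` is symmetric and
transitive, and any such relation is the union of the squares of its classes.
-/

universe u

section InnerEqOne

variable {𝕜 E : Type*} [RCLike 𝕜] [NormedAddCommGroup E] [InnerProductSpace 𝕜 E]

theorem inner_eq_one_symm {x y : E} (h : inner 𝕜 x y = 1) : inner 𝕜 y x = 1 := by
  rw [← inner_conj_symm, h, map_one]

theorem inner_self_eq_one_of_inner_eq_one {x y : E}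
    (hx : inner 𝕜 x x = 0 ∨ inner 𝕜 x x = 1) (h : inner 𝕜 x y = 1) : inner 𝕜 x x = 1 := by
  refine hx.resolve_left fun hx0 => one_ne_zero (α := 𝕜) ?_
  rw [← h, inner_self_eq_zero.mp hx0, inner_zero_left]

theorem eq_of_inner_eq_one {x y : E} (hx : inner 𝕜 x x = 1) (hy : inner 𝕜 y y = 1)
    (h : inner 𝕜 x y = 1) : x = y := by
  rw [← sub_eq_zero, ← inner_self_eq_zero (𝕜 := 𝕜), inner_sub_sub_self, hx, hy, h,
    inner_eq_one_symm h]
  ring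

end InnerEqOne

theorem exists_pairwise_disjoint_setOf_eq_iUnion_prod {S : Type u} {r : S → S → Prop}
    (hsymm : ∀ s t, r s t → r t s) (htrans : ∀ s t u, r s t → r t u → r s u) :
    ∃ (I : Type u) (X : I → Set S), Pairwise (Function.onFun Disjoint X) ∧
      {p : S × S | r p.1 p.2} = ⋃ i, X i ×ˢ X i := by
  have class_eq {s s'} (hss' : r s s') : {t | r s t} = {t | r s' t} :=
    Set.ext fun _ => ⟨htrans _ _ _ (hsymm _ _ hss'), htrans _ _ _ hss'⟩
  refine ⟨Set.range fun s => {t | r s t}, Subtype.val, ?_, ?_⟩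
  · rintro ⟨_, s, rfl⟩ ⟨_, s', rfl⟩ hne
    refine Set.disjoint_left.mpr fun t hst hs't => hne (Subtype.ext ?_)
    exact class_eq (htrans _ _ _ hst (hsymm _ _ hs't))
  · ext ⟨a, b⟩
    simp only [Set.mem_ofPred_eq, Set.mem_iUnion, Set.mem_prod, Subtype.exists,
      Set.mem_range, exists_prop, exists_exists_eq_and]
    constructor
    · exact fun hab => ⟨a, htrans _ _ _ hab (hsymm _ _ hab), hab⟩
    · exact fun ⟨s, hsa, hsb⟩ => htrans _ _ _ (hsymm _ _ hsa) hsb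

theorem stmt7 {S : Type u} {H : Type*} [NormedAddCommGroup H] [InnerProductSpace ℂ H]
    (v : S → H)
    (h01 : ∀ s t : S, (inner ℂ (v s) (v t) : ℂ) = 0 ∨ (inner ℂ (v s) (v t) : ℂ) = 1) :
    (∀ s t : S, (inner ℂ (v s) (v t) : ℂ) = 1 → (inner ℂ (v t) (v s) : ℂ) = 1) ∧
    (∀ s t u : S, (inner ℂ (v s) (v t) : ℂ) = 1 → (inner ℂ (v t) (v u) : ℂ) = 1 →
      (inner ℂ (v s) (v u) : ℂ) = 1) ∧
    ∃ (I : Type u) (X : I → Set S), Pairwise (Function.onFun Disjoint X) ∧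
      {p : S × S | (inner ℂ (v p.1) (v p.2) : ℂ) = 1} = ⋃ i, X i ×ˢ X i := by
  have hsymm (s t : S) : (inner ℂ (v s) (v t) : ℂ) = 1 → (inner ℂ (v t) (v s) : ℂ) = 1 :=
    inner_eq_one_symm
  have htrans (s t u : S) : (inner ℂ (v s) (v t) : ℂ) = 1 → (inner ℂ (v t) (v u) : ℂ) = 1 →
      (inner ℂ (v s) (v u) : ℂ) = 1 := by
    intro hst htu
    have hss := inner_self_eq_one_of_inner_eq_one (h01 s s) hst
    have htt := inner_self_eq_one_of_inner_eq_one (h01 t t) (hsymm s t hst)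
    rwa [eq_of_inner_eq_one hss htt hst]
  exact ⟨hsymm, htrans, exists_pairwise_disjoint_setOf_eq_iUnion_prod hsymm htrans⟩
end

section
/- Let G = ℝ × ℤ/2ℤ, identified with its Pontryagin dual Γ ≅ G. Define H = {(a,0,b,0) : a,b ∈ ℝ} ∪ {(c,1,d,1) : c,d ∈ ℝ} ⊆ G × Γ = ℝ × ℤ/2ℤ × ℝ × ℤ/2ℤ. Then H is an open subgroup of G × Γ, but H is not of the form A × B for any subgroups A ≤ G and B ≤ Γ. -/
instance : TopologicalSpace (ZMod 2) := ⊥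

/-- The subset `H = {(a,0,b,0)} ∪ {(c,1,d,1)}` of `G × Γ = (ℝ × ℤ/2) × (ℝ × ℤ/2)`. -/
def diagH : Set ((ℝ × ZMod 2) × (ℝ × ZMod 2)) :=
  {p | (∃ a b : ℝ, p = ((a, 0), (b, 0))) ∨ (∃ c d : ℝ, p = ((c, 1), (d, 1)))}

instance : DiscreteTopology (ZMod 2) := ⟨rfl⟩

theorem isOpen_setOf_eq_of_discreteTopology {X D : Type*} [TopologicalSpace X]
    [TopologicalSpace D] [DiscreteTopology D] {f g : X → D} (hf : Continuous f)
    (hg : Continuous g) : IsOpen {x | f x = g x} :=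
  (isOpen_discrete {q : D × D | q.1 = q.2}).preimage (hf.prodMk hg)

theorem Set.mk_mem_of_eq_prod {α β : Type*} {S : Set (α × β)} {s : Set α} {t : Set β}
    (h : S = s ×ˢ t) {a a' : α} {b b' : β} (hab : (a, b) ∈ S) (hab' : (a', b') ∈ S) :
    (a, b') ∈ S := by
  rw [h] at *
  exact ⟨hab.1, hab'.2⟩

def parityDiagonal : AddSubgroup ((ℝ × ZMod 2) × (ℝ × ZMod 2)) :=
  AddMonoidHom.eqLocus ((AddMonoidHom.snd ℝ (ZMod 2)).comp (AddMonoidHom.fst _ _))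
    ((AddMonoidHom.snd ℝ (ZMod 2)).comp (AddMonoidHom.snd _ _))

theorem coe_parityDiagonal : (parityDiagonal : Set ((ℝ × ZMod 2) × (ℝ × ZMod 2))) =
    {p | p.1.2 = p.2.2} := rfl

theorem diagH_eq_parityDiagonal : diagH = parityDiagonal := by
  ext ⟨⟨a, ε⟩, ⟨b, δ⟩⟩
  rw [coe_parityDiagonal]
  constructor
  · rintro (⟨a, b, h⟩ | ⟨c, d, h⟩) <;> simp_all
  · rintro (rfl : ε = δ)
    fin_cases ε
    exacts [Or.inl ⟨a, b, rfl⟩, Or.inr ⟨a, b, rfl⟩]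

theorem stmt15 :
    IsOpen diagH ∧
    (∃ S : AddSubgroup ((ℝ × ZMod 2) × (ℝ × ZMod 2)), (S : Set _) = diagH) ∧
    ¬ ∃ (A B : AddSubgroup (ℝ × ZMod 2)),
        diagH = (A : Set (ℝ × ZMod 2)) ×ˢ (B : Set (ℝ × ZMod 2)) := by
  rw [diagH_eq_parityDiagonal, coe_parityDiagonal]
  refine ⟨isOpen_setOf_eq_of_discreteTopology (by fun_prop) (by fun_prop),
    ⟨parityDiagonal, rfl⟩, ?_⟩
  rintro ⟨A, B, h⟩
  -- `((0,1),(0,1))` and `((0,0),(0,0))` lie in `H`, but mixing their coordinates does not.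
  have hmixed := Set.mk_mem_of_eq_prod h (a := ((0 : ℝ), (1 : ZMod 2))) (b := (0, 1))
    (a' := 0) (b' := 0) rfl rfl
  exact one_ne_zero hmixed
end
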